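/- arXiv:2203.09995 — 2 statements merged into one kernel-verified Lean document; each statement's English description precedes it below -/
import Mathlib

section
/- Let G be a symmetric real 2×2 matrix with entries g11, g12 = g21, g22 and determinant g := g11·g22 − g12² > 0, let γ1 > 0, and let p = (p1,p2), λ = (λ1,λ2) ∈ ℝ². Define a1 = −g11²/γ1 − g12²/γ1 − g, a2 = b1 = −(g11·g12 + g12·g22)/γ1, a3 = λ1·g11 + λ2·g12 − √g·p1, b2 = −g12²/γ1 − g22²/γ1 − g, b3 = λ1·g12 + λ2·g22 − √g·p2, and X = (a2·b3 − a3·b2)/(a1·b2 − a2·b1), Y = (a1·b3 − a3·b1)/(a2·b1 − a1·b2). Set μ1* = λ1 − (g11/γ1)·X − (g12/γ1)·Y, μ2* = λ2 − (g12/γ1)·X − (g22/γ1)·Y, q1* = p1 + √g·X, q2* = p2 + √g·Y. Then (q*,μ*) satisfies the constraints g11·μ1* + g12·μ2* = √g·q1* and g12·μ1* + g22·μ2* = √g·q2*, and for every (q,μ) ∈ ℝ²×ℝ² satisfying g11·μ1 + g12·μ2 = √g·q1 and g12·μ1 + g22·μ2 = √g·q2 one has (q1*−p1)² + (q2*−p2)²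 + γ1·((μ1*−λ1)² + (μ2*−λ2)²) ≤ (q1−p1)² + (q2−p2)² + γ1·((μ1−λ1)² + (μ2−λ2)²), with equality only if (q,μ) = (q*,μ*). -/
/-!
Writing `s = √g` and `v = (X, Y)`, the candidate is `q* = p + s v`, `μ* = λ - G v / γ1`: the
stationarity conditions of the Lagrangian with multiplier `v`. Substituting it into the
constraint gives the linear system `(G² / γ1 + g I) v = G λ - s p`, whose matrix is positive
definite, so Cramer's rule yields `v`. For any feasible `(q, μ)` the cost splits as the optimal
cost plus the weighted squared distance to `(q*, μ*)`, since the cross term is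
`2 ⟨v, s (q - q*) - G (μ - μ*)⟩ = 0`.
-/

def projCost (γ p1 p2 l1 l2 q1 q2 μ1 μ2 : ℝ) : ℝ :=
  (q1 - p1) ^ 2 + (q2 - p2) ^ 2 + γ * ((μ1 - l1) ^ 2 + (μ2 - l2) ^ 2)

section projCost

variable {γ p1 p2 l1 l2 q1 q2 μ1 μ2 : ℝ}

lemma projCost_nonneg (hγ : 0 ≤ γ) : 0 ≤ projCost γ p1 p2 l1 l2 q1 q2 μ1 μ2 := by
  unfold projCost
  positivity

lemma projCost_eq_zero_iff (hγ : 0 < γ) :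
    projCost γ p1 p2 l1 l2 q1 q2 μ1 μ2 = 0 ↔ q1 = p1 ∧ q2 = p2 ∧ μ1 = l1 ∧ μ2 = l2 := by
  rw [projCost, add_eq_zero_iff_of_nonneg (by positivity) (by positivity),
    add_eq_zero_iff_of_nonneg (sq_nonneg _) (sq_nonneg _), mul_eq_zero,
    add_eq_zero_iff_of_nonneg (sq_nonneg _) (sq_nonneg _)]
  simp [hγ.ne', sub_eq_zero, and_assoc]

end projCost

lemma two_by_two_cramer {K : Type*} [Field K] {a1 a2 a3 b1 b2 b3 : K}
    (hD : a1 * b2 - a2 * b1 ≠ 0) :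
    a1 * ((a2 * b3 - a3 * b2) / (a1 * b2 - a2 * b1)) +
        a2 * ((a1 * b3 - a3 * b1) / (a2 * b1 - a1 * b2)) + a3 = 0 ∧
      b1 * ((a2 * b3 - a3 * b2) / (a1 * b2 - a2 * b1)) +
        b2 * ((a1 * b3 - a3 * b1) / (a2 * b1 - a1 * b2)) + b3 = 0 := by
  rw [show a2 * b1 - a1 * b2 = -(a1 * b2 - a2 * b1) by ring, div_neg]
  simp only [div_eq_mul_inv]
  constructor
  · linear_combination -a3 * mul_inv_cancel₀ hD
  · linear_combination -b3 * mul_inv_cancel₀ hD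

/-- This is `det (G² / γ + g I) = det(G)² / γ² + g · tr(G²) / γ + g²`. -/
lemma lagrange_system_det_pos {g11 g12 g22 γ g : ℝ} (hγ : 0 < γ) (hg : 0 < g) :
    0 < (-g11 ^ 2 / γ - g12 ^ 2 / γ - g) * (-g12 ^ 2 / γ - g22 ^ 2 / γ - g) -
      (-(g11 * g12 + g12 * g22) / γ) * (-(g11 * g12 + g12 * g22) / γ) := by
  have hexpand : (-g11 ^ 2 / γ - g12 ^ 2 / γ - g) * (-g12 ^ 2 / γ - g22 ^ 2 / γ - g) -
      (-(g11 * g12 + g12 * g22) / γ) * (-(g11 * g12 + g12 * g22) / γ) =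
      (g11 * g22 - g12 ^ 2) ^ 2 / γ ^ 2 + g * (g11 ^ 2 + 2 * g12 ^ 2 + g22 ^ 2) / γ + g ^ 2 := by
    field_simp
    ring
  rw [hexpand]
  positivity

section LagrangePoint

variable {g11 g12 g22 γ g s p1 p2 l1 l2 X Y q1s q2s μ1s μ2s : ℝ}

lemma lagrange_point_feasible (hs : s ^ 2 = g)
    (h1 : (-g11 ^ 2 / γ - g12 ^ 2 / γ - g) * X + -(g11 * g12 + g12 * g22) / γ * Y +
      (l1 * g11 + l2 * g12 - s * p1) = 0)
    (h2 : -(g11 * g12 + g12 * g22) / γ * X + (-g12 ^ 2 / γ - g22 ^ 2 / γ - g) * Y +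
      (l1 * g12 + l2 * g22 - s * p2) = 0)
    (hμ1s : μ1s = l1 - (g11 / γ) * X - (g12 / γ) * Y)
    (hμ2s : μ2s = l2 - (g12 / γ) * X - (g22 / γ) * Y)
    (hq1s : q1s = p1 + s * X) (hq2s : q2s = p2 + s * Y) :
    g11 * μ1s + g12 * μ2s = s * q1s ∧ g12 * μ1s + g22 * μ2s = s * q2s := by
  subst hμ1s hμ2s hq1s hq2s
  constructor
  · linear_combination h1 - X * hs
  · linear_combination h2 - Y * hs

lemma projCost_eq_add_projCost_of_feasible {q1 q2 μ1 μ2 : ℝ} (hγ : γ ≠ 0)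
    (hq1s : q1s = p1 + s * X) (hq2s : q2s = p2 + s * Y)
    (hμ1s : μ1s = l1 - (g11 / γ) * X - (g12 / γ) * Y)
    (hμ2s : μ2s = l2 - (g12 / γ) * X - (g22 / γ) * Y)
    (hc1s : g11 * μ1s + g12 * μ2s = s * q1s) (hc2s : g12 * μ1s + g22 * μ2s = s * q2s)
    (hc1 : g11 * μ1 + g12 * μ2 = s * q1) (hc2 : g12 * μ1 + g22 * μ2 = s * q2) :
    projCost γ p1 p2 l1 l2 q1 q2 μ1 μ2 =
      projCost γ p1 p2 l1 l2 q1s q2s μ1s μ2s + projCost γ q1s q2s μ1s μ2s q1 q2 μ1 μ2 := by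
  have hcross : projCost γ p1 p2 l1 l2 q1 q2 μ1 μ2 -
      (projCost γ p1 p2 l1 l2 q1s q2s μ1s μ2s + projCost γ q1s q2s μ1s μ2s q1 q2 μ1 μ2) =
      2 * (X * (s * (q1 - q1s) - (g11 * (μ1 - μ1s) + g12 * (μ2 - μ2s))) +
        Y * (s * (q2 - q2s) - (g12 * (μ1 - μ1s) + g22 * (μ2 - μ2s)))) := by
    rw [hq1s, hq2s, hμ1s, hμ2s]
    unfold projCost
    field_simp
    ring
  linear_combination hcross + 2 * X * (hc1s - hc1) + 2 * Y * (hc2s - hc2)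

end LagrangePoint

theorem projection_closed_form_general
    (g11 g12 g22 γ1 g : ℝ) (hγ1 : 0 < γ1)
    (hgpos : 0 < g)
    (p1 p2 lam1 lam2 : ℝ)
    (a1 a2 a3 b1 b2 b3 X Y μ1s μ2s q1s q2s : ℝ)
    (ha1 : a1 = -g11 ^ 2 / γ1 - g12 ^ 2 / γ1 - g)
    (ha2 : a2 = -(g11 * g12 + g12 * g22) / γ1)
    (ha3 : a3 = lam1 * g11 + lam2 * g12 - Real.sqrt g * p1)
    (hb1 : b1 = -(g11 * g12 + g12 * g22) / γ1)
    (hb2 : b2 = -g12 ^ 2 / γ1 - g22 ^ 2 / γ1 - g)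
    (hb3 : b3 = lam1 * g12 + lam2 * g22 - Real.sqrt g * p2)
    (hX : X = (a2 * b3 - a3 * b2) / (a1 * b2 - a2 * b1))
    (hY : Y = (a1 * b3 - a3 * b1) / (a2 * b1 - a1 * b2))
    (hμ1s : μ1s = lam1 - (g11 / γ1) * X - (g12 / γ1) * Y)
    (hμ2s : μ2s = lam2 - (g12 / γ1) * X - (g22 / γ1) * Y)
    (hq1s : q1s = p1 + Real.sqrt g * X)
    (hq2s : q2s = p2 + Real.sqrt g * Y) :
    (g11 * μ1s + g12 * μ2s = Real.sqrt g * q1s) ∧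
    (g12 * μ1s + g22 * μ2s = Real.sqrt g * q2s) ∧
    ∀ q1 q2 μ1 μ2 : ℝ,
      g11 * μ1 + g12 * μ2 = Real.sqrt g * q1 →
      g12 * μ1 + g22 * μ2 = Real.sqrt g * q2 →
      ((q1s - p1) ^ 2 + (q2s - p2) ^ 2 +
          γ1 * ((μ1s - lam1) ^ 2 + (μ2s - lam2) ^ 2) ≤
        (q1 - p1) ^ 2 + (q2 - p2) ^ 2 +
          γ1 * ((μ1 - lam1) ^ 2 + (μ2 - lam2) ^ 2)) ∧
      ((q1 - p1) ^ 2 + (q2 - p2) ^ 2 +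
          γ1 * ((μ1 - lam1) ^ 2 + (μ2 - lam2) ^ 2) =
        (q1s - p1) ^ 2 + (q2s - p2) ^ 2 +
          γ1 * ((μ1s - lam1) ^ 2 + (μ2s - lam2) ^ 2) →
        q1 = q1s ∧ q2 = q2s ∧ μ1 = μ1s ∧ μ2 = μ2s) := by
  subst ha1 ha2 ha3 hb1 hb2 hb3
  obtain ⟨h1, h2⟩ := two_by_two_cramer (lagrange_system_det_pos hγ1 hgpos).ne'
  rw [← hX, ← hY] at h1 h2
  obtain ⟨hc1s, hc2s⟩ :=
    lagrange_point_feasible (Real.sq_sqrt hgpos.le) h1 h2 hμ1s hμ2s hq1s hq2s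
  refine ⟨hc1s, hc2s, fun q1 q2 μ1 μ2 hc1 hc2 => ?_⟩
  have hsplit := projCost_eq_add_projCost_of_feasible hγ1.ne' hq1s hq2s hμ1s hμ2s
    hc1s hc2s hc1 hc2
  exact ⟨(le_add_of_nonneg_right (projCost_nonneg hγ1.le)).trans_eq hsplit.symm,
    fun hopt => (projCost_eq_zero_iff hγ1).1 (add_eq_left.mp (hsplit.symm.trans hopt))⟩

/-- Theorem 3.1 (thm.frac2) of "Elastica Models for Color Image Regularization",
for a single channel: the closed-form solution of the projection subproblem
`min |q−p|² + γ1·|μ−λ|²` subject to the constraint `√g·q = μ·G`, where `G` is a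
symmetric 2×2 matrix with entries `g11, g12 = g21, g22` and determinant
`g = g11·g22 − g12² > 0`.  Here `lam1, lam2` play the role of `λ1, λ2`,
`μ1s, μ2s, q1s, q2s` are `μ1*, μ2*, q1*, q2*`. -/
theorem projection_closed_form
    (g11 g12 g22 γ1 g : ℝ) (hγ1 : 0 < γ1)
    (hg : g = g11 * g22 - g12 ^ 2) (hgpos : 0 < g)
    (p1 p2 lam1 lam2 : ℝ)
    (a1 a2 a3 b1 b2 b3 X Y μ1s μ2s q1s q2s : ℝ)
    (ha1 : a1 = -g11 ^ 2 / γ1 - g12 ^ 2 / γ1 - g)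
    (ha2 : a2 = -(g11 * g12 + g12 * g22) / γ1)
    (ha3 : a3 = lam1 * g11 + lam2 * g12 - Real.sqrt g * p1)
    (hb1 : b1 = -(g11 * g12 + g12 * g22) / γ1)
    (hb2 : b2 = -g12 ^ 2 / γ1 - g22 ^ 2 / γ1 - g)
    (hb3 : b3 = lam1 * g12 + lam2 * g22 - Real.sqrt g * p2)
    (hX : X = (a2 * b3 - a3 * b2) / (a1 * b2 - a2 * b1))
    (hY : Y = (a1 * b3 - a3 * b1) / (a2 * b1 - a1 * b2))
    (hμ1s : μ1s = lam1 - (g11 / γ1) * X - (g12 / γ1) * Y)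
    (hμ2s : μ2s = lam2 - (g12 / γ1) * X - (g22 / γ1) * Y)
    (hq1s : q1s = p1 + Real.sqrt g * X)
    (hq2s : q2s = p2 + Real.sqrt g * Y) :
    (g11 * μ1s + g12 * μ2s = Real.sqrt g * q1s) ∧
    (g12 * μ1s + g22 * μ2s = Real.sqrt g * q2s) ∧
    ∀ q1 q2 μ1 μ2 : ℝ,
      g11 * μ1 + g12 * μ2 = Real.sqrt g * q1 →
      g12 * μ1 + g22 * μ2 = Real.sqrt g * q2 →
      ((q1s - p1) ^ 2 + (q2s - p2) ^ 2 +
          γ1 * ((μ1s - lam1) ^ 2 + (μ2s - lam2) ^ 2) ≤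
        (q1 - p1) ^ 2 + (q2 - p2) ^ 2 +
          γ1 * ((μ1 - lam1) ^ 2 + (μ2 - lam2) ^ 2)) ∧
      ((q1 - p1) ^ 2 + (q2 - p2) ^ 2 +
          γ1 * ((μ1 - lam1) ^ 2 + (μ2 - lam2) ^ 2) =
        (q1s - p1) ^ 2 + (q2s - p2) ^ 2 +
          γ1 * ((μ1s - lam1) ^ 2 + (μ2s - lam2) ^ 2) →
        q1 = q1s ∧ q2 = q2s ∧ μ1 = μ1s ∧ μ2 = μ2s) :=
  projection_closed_form_general g11 g12 g22 γ1 g hγ1 hgpos p1 p2 lam1 lam2 a1 a2 a3 b1 b2 b3 X Y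
    μ1s μ2s q1s q2s ha1 ha2 ha3 hb1 hb2 hb3 hX hY hμ1s hμ2s hq1s hq2s
end

section
/- Let G be a symmetric real 2×2 matrix with entries g11, g12, g22, let g := g11·g22 − g12², and let α, γ1 ∈ ℝ with γ1 > 0 and g − α² > 0. Let p = (p1,p2), λ = (λ1,λ2) ∈ ℝ². Define a1 = −g22² − g12² − (g−α²)/γ1, a2 = b1 = g12·g22 + g11·g12, a3 = g22·p1 − g12·p2 − √(g−α²)·λ1, b2 = −g11² − g12² − (g−α²)/γ1, b3 = g11·p2 − g12·p1 − √(g−α²)·λ2, and X = (a2·b3 − a3·b2)/(a1·b2 − a2·b1), Y = (a1·b3 − a3·b1)/(a2·b1 − a1·b2). Set q1* = p1 − g22·X + g12·Y, q2* = p2 + g12·X − g11·Y, ν1* = λ1 + (√(g−α²)/γ1)·X, ν2* = λ2 + (√(g−α²)/γ1)·Y. Then (q*,ν*) satisfies the constraints √(g−α²)·ν1* = g22·q1* − g12·q2* and √(g−α²)·ν2* = g11·q2* − g12·q1*, and for every (q,ν) ∈ ℝ²×ℝ² satisfying √(g−α²)·ν1 = g22·q1 − g12·q2 and √(g−α²)·ν2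 = g11·q2 − g12·q1 one has (q1*−p1)² + (q2*−p2)² + γ1·((ν1*−λ1)² + (ν2*−λ2)²) ≤ (q1−p1)² + (q2−p2)² + γ1·((ν1−λ1)² + (ν2−λ2)²), with equality only if (q,ν) = (q*,ν*). -/
/-!
The objective is a weighted squared distance, so it suffices to show the Pythagorean identity
`F(q, ν) = F(q*, ν*) + |q − q*|² + γ1·|ν − ν*|²` for every feasible `(q, ν)`.
The point `(q*, ν*)` is the Lagrange stationary point with multiplier `(X, Y)`:
`q* − p = −cof(G)·(X, Y)` and `γ1·(ν* − λ) = √(g−α²)·(X, Y)`, where `(X, Y)` solves,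
by Cramer's rule, the 2×2 system expressing feasibility of `(q*, ν*)`. Its determinant is
`(g11·g22 − g12²)² + c·(g11² + g22² + 2·g12²) + c²` with `c = (g−α²)/γ1 > 0`.
-/

theorem cramer_two {K : Type*} [Field K] {a1 a2 a3 b1 b2 b3 X Y : K}
    (hD : a1 * b2 - a2 * b1 ≠ 0)
    (hX : X = (a2 * b3 - a3 * b2) / (a1 * b2 - a2 * b1))
    (hY : Y = (a1 * b3 - a3 * b1) / (a2 * b1 - a1 * b2)) :
    a1 * X + a2 * Y + a3 = 0 ∧ b1 * X + b2 * Y + b3 = 0 := by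
  rw [← neg_sub (a1 * b2), div_neg, ← neg_div, neg_sub] at hY
  have hXD := (eq_div_iff hD).1 hX
  have hYD := (eq_div_iff hD).1 hY
  constructor <;> refine mul_left_cancel₀ hD ?_
  · linear_combination a1 * hXD + a2 * hYD
  · linear_combination b1 * hXD + b2 * hYD

theorem cofactor_system_det_pos {g11 g12 g22 c : ℝ} (hc : 0 < c) :
    0 < (-g22 ^ 2 - g12 ^ 2 - c) * (-g11 ^ 2 - g12 ^ 2 - c) -
      (g12 * g22 + g11 * g12) * (g12 * g22 + g11 * g12) := by
  have h : (-g22 ^ 2 - g12 ^ 2 - c) * (-g11 ^ 2 - g12 ^ 2 - c) -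
      (g12 * g22 + g11 * g12) * (g12 * g22 + g11 * g12) =
      (g11 * g22 - g12 ^ 2) ^ 2 + c * (g11 ^ 2 + g22 ^ 2 + 2 * g12 ^ 2) + c ^ 2 := by
    ring
  rw [h]
  positivity

def weightedSqDist (γ q1 q2 ν1 ν2 p1 p2 lam1 lam2 : ℝ) : ℝ :=
  (q1 - p1) ^ 2 + (q2 - p2) ^ 2 + γ * ((ν1 - lam1) ^ 2 + (ν2 - lam2) ^ 2)

section weightedSqDist

variable {γ q1 q2 ν1 ν2 p1 p2 lam1 lam2 : ℝ}

theorem weightedSqDist_nonneg (hγ : 0 ≤ γ) :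
    0 ≤ weightedSqDist γ q1 q2 ν1 ν2 p1 p2 lam1 lam2 := by
  unfold weightedSqDist
  positivity

theorem eq_of_weightedSqDist_eq_zero (hγ : 0 < γ)
    (h : weightedSqDist γ q1 q2 ν1 ν2 p1 p2 lam1 lam2 = 0) :
    q1 = p1 ∧ q2 = p2 ∧ ν1 = lam1 ∧ ν2 = lam2 := by
  obtain ⟨hq, hν⟩ := (add_eq_zero_iff_of_nonneg (by positivity) (by positivity)).1 h
  obtain ⟨hq1, hq2⟩ := (add_eq_zero_iff_of_nonneg (sq_nonneg _) (sq_nonneg _)).1 hq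
  obtain ⟨hν1, hν2⟩ := (add_eq_zero_iff_of_nonneg (sq_nonneg _) (sq_nonneg _)).1
    ((mul_eq_zero.1 hν).resolve_left hγ.ne')
  simp_all [sub_eq_zero]

theorem weightedSqDist_le_and_eq_of_eq_add (hγ : 0 < γ) {q1s q2s ν1s ν2s : ℝ}
    (h : weightedSqDist γ q1 q2 ν1 ν2 p1 p2 lam1 lam2 =
      weightedSqDist γ q1s q2s ν1s ν2s p1 p2 lam1 lam2 +
        weightedSqDist γ q1 q2 ν1 ν2 q1s q2s ν1s ν2s) :
    weightedSqDist γ q1s q2s ν1s ν2s p1 p2 lam1 lam2 ≤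
        weightedSqDist γ q1 q2 ν1 ν2 p1 p2 lam1 lam2 ∧
      (weightedSqDist γ q1 q2 ν1 ν2 p1 p2 lam1 lam2 =
          weightedSqDist γ q1s q2s ν1s ν2s p1 p2 lam1 lam2 →
        q1 = q1s ∧ q2 = q2s ∧ ν1 = ν1s ∧ ν2 = ν2s) := by
  refine ⟨h ▸ le_add_of_nonneg_right (weightedSqDist_nonneg hγ.le), fun heq => ?_⟩
  exact eq_of_weightedSqDist_eq_zero hγ (by linarith)

/-- The cross term equals
`X·(s·Δν1 − (g22·Δq1 − g12·Δq2)) + Y·(s·Δν2 − (g11·Δq2 − g12·Δq1))`,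
which vanishes on feasible directions because `cof(G)` is symmetric. -/
theorem weightedSqDist_eq_add_of_lagrange {q1s q2s ν1s ν2s g11 g12 g22 s X Y : ℝ}
    (hq1s : q1s - p1 = g12 * Y - g22 * X) (hq2s : q2s - p2 = g12 * X - g11 * Y)
    (hν1s : γ * (ν1s - lam1) = s * X) (hν2s : γ * (ν2s - lam2) = s * Y)
    (hd1 : s * (ν1 - ν1s) = g22 * (q1 - q1s) - g12 * (q2 - q2s))
    (hd2 : s * (ν2 - ν2s) = g11 * (q2 - q2s) - g12 * (q1 - q1s)) :
    weightedSqDist γ q1 q2 ν1 ν2 p1 p2 lam1 lam2 =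
      weightedSqDist γ q1s q2s ν1s ν2s p1 p2 lam1 lam2 +
        weightedSqDist γ q1 q2 ν1 ν2 q1s q2s ν1s ν2s := by
  unfold weightedSqDist
  linear_combination (2 * (q1 - q1s)) * hq1s + (2 * (q2 - q2s)) * hq2s +
    (2 * (ν1 - ν1s)) * hν1s + (2 * (ν2 - ν2s)) * hν2s + (2 * X) * hd1 + (2 * Y) * hd2

end weightedSqDist

theorem projection_closed_form_cofactor_general
    (g11 g12 g22 α γ1 g : ℝ) (hγ1 : 0 < γ1)
    (hgα : 0 < g - α ^ 2)
    (p1 p2 lam1 lam2 : ℝ)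
    (a1 a2 a3 b1 b2 b3 X Y ν1s ν2s q1s q2s : ℝ)
    (ha1 : a1 = -g22 ^ 2 - g12 ^ 2 - (g - α ^ 2) / γ1)
    (ha2 : a2 = g12 * g22 + g11 * g12)
    (ha3 : a3 = g22 * p1 - g12 * p2 - Real.sqrt (g - α ^ 2) * lam1)
    (hb1 : b1 = g12 * g22 + g11 * g12)
    (hb2 : b2 = -g11 ^ 2 - g12 ^ 2 - (g - α ^ 2) / γ1)
    (hb3 : b3 = g11 * p2 - g12 * p1 - Real.sqrt (g - α ^ 2) * lam2)
    (hX : X = (a2 * b3 - a3 * b2) / (a1 * b2 - a2 * b1))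
    (hY : Y = (a1 * b3 - a3 * b1) / (a2 * b1 - a1 * b2))
    (hq1s : q1s = p1 - g22 * X + g12 * Y)
    (hq2s : q2s = p2 + g12 * X - g11 * Y)
    (hν1s : ν1s = lam1 + (Real.sqrt (g - α ^ 2) / γ1) * X)
    (hν2s : ν2s = lam2 + (Real.sqrt (g - α ^ 2) / γ1) * Y) :
    (Real.sqrt (g - α ^ 2) * ν1s = g22 * q1s - g12 * q2s) ∧
    (Real.sqrt (g - α ^ 2) * ν2s = g11 * q2s - g12 * q1s) ∧
    ∀ q1 q2 ν1 ν2 : ℝ,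
      Real.sqrt (g - α ^ 2) * ν1 = g22 * q1 - g12 * q2 →
      Real.sqrt (g - α ^ 2) * ν2 = g11 * q2 - g12 * q1 →
      ((q1s - p1) ^ 2 + (q2s - p2) ^ 2 +
          γ1 * ((ν1s - lam1) ^ 2 + (ν2s - lam2) ^ 2) ≤
        (q1 - p1) ^ 2 + (q2 - p2) ^ 2 +
          γ1 * ((ν1 - lam1) ^ 2 + (ν2 - lam2) ^ 2)) ∧
      ((q1 - p1) ^ 2 + (q2 - p2) ^ 2 +
          γ1 * ((ν1 - lam1) ^ 2 + (ν2 - lam2) ^ 2) =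
        (q1s - p1) ^ 2 + (q2s - p2) ^ 2 +
          γ1 * ((ν1s - lam1) ^ 2 + (ν2s - lam2) ^ 2) →
        q1 = q1s ∧ q2 = q2s ∧ ν1 = ν1s ∧ ν2 = ν2s) := by
  set s := Real.sqrt (g - α ^ 2)
  have hs : s ^ 2 = g - α ^ 2 := Real.sq_sqrt hgα.le
  have hD : a1 * b2 - a2 * b1 ≠ 0 := by
    rw [ha1, ha2, hb1, hb2]
    exact (cofactor_system_det_pos (div_pos hgα hγ1)).ne'
  obtain ⟨hE1, hE2⟩ := cramer_two hD hX hY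
  subst ha1 ha2 ha3 hb1 hb2 hb3
  have hcon1 : s * ν1s = g22 * q1s - g12 * q2s := by
    rw [hν1s, hq1s, hq2s]
    linear_combination -hE1 + (X / γ1) * hs
  have hcon2 : s * ν2s = g11 * q2s - g12 * q1s := by
    rw [hν2s, hq1s, hq2s]
    linear_combination -hE2 + (Y / γ1) * hs
  have hν1 : γ1 * (ν1s - lam1) = s * X := by rw [hν1s]; field_simp; ring
  have hν2 : γ1 * (ν2s - lam2) = s * Y := by rw [hν2s]; field_simp; ring
  refine ⟨hcon1, hcon2, fun q1 q2 ν1 ν2 hc1 hc2 => weightedSqDist_le_and_eq_of_eq_add hγ1 ?_⟩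
  exact weightedSqDist_eq_add_of_lagrange (g11 := g11) (g12 := g12) (g22 := g22)
    (by linear_combination hq1s) (by linear_combination hq2s) hν1 hν2
    (by linear_combination hc1 - hcon1) (by linear_combination hc2 - hcon2)

/-- Theorem 3.2 (thm.frac2.2) of "Elastica Models for Color Image
Regularization", for a single channel: the closed-form solution of the
projection subproblem `min |q−p|² + γ1·|ν−λ|²` subject to the constraint
`√(g−α²)·ν = q·cof(G)`, where `G` is symmetric with entries `g11, g12, g22`,
`g = g11·g22 − g12²`, and `cof(G) = [[g22,−g12],[−g12,g11]]`.
Here `lam1, lam2` play the role of `λ1, λ2`, and `ν1s, ν2s, q1s, q2s`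
are `ν1*, ν2*, q1*, q2*`. -/
theorem projection_closed_form_cofactor
    (g11 g12 g22 α γ1 g : ℝ) (hγ1 : 0 < γ1)
    (hg : g = g11 * g22 - g12 ^ 2) (hgα : 0 < g - α ^ 2)
    (p1 p2 lam1 lam2 : ℝ)
    (a1 a2 a3 b1 b2 b3 X Y ν1s ν2s q1s q2s : ℝ)
    (ha1 : a1 = -g22 ^ 2 - g12 ^ 2 - (g - α ^ 2) / γ1)
    (ha2 : a2 = g12 * g22 + g11 * g12)
    (ha3 : a3 = g22 * p1 - g12 * p2 - Real.sqrt (g - α ^ 2) * lam1)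
    (hb1 : b1 = g12 * g22 + g11 * g12)
    (hb2 : b2 = -g11 ^ 2 - g12 ^ 2 - (g - α ^ 2) / γ1)
    (hb3 : b3 = g11 * p2 - g12 * p1 - Real.sqrt (g - α ^ 2) * lam2)
    (hX : X = (a2 * b3 - a3 * b2) / (a1 * b2 - a2 * b1))
    (hY : Y = (a1 * b3 - a3 * b1) / (a2 * b1 - a1 * b2))
    (hq1s : q1s = p1 - g22 * X + g12 * Y)
    (hq2s : q2s = p2 + g12 * X - g11 * Y)
    (hν1s : ν1s = lam1 + (Real.sqrt (g - α ^ 2) / γ1) * X)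
    (hν2s : ν2s = lam2 + (Real.sqrt (g - α ^ 2) / γ1) * Y) :
    (Real.sqrt (g - α ^ 2) * ν1s = g22 * q1s - g12 * q2s) ∧
    (Real.sqrt (g - α ^ 2) * ν2s = g11 * q2s - g12 * q1s) ∧
    ∀ q1 q2 ν1 ν2 : ℝ,
      Real.sqrt (g - α ^ 2) * ν1 = g22 * q1 - g12 * q2 →
      Real.sqrt (g - α ^ 2) * ν2 = g11 * q2 - g12 * q1 →
      ((q1s - p1) ^ 2 + (q2s - p2) ^ 2 +
          γ1 * ((ν1s - lam1) ^ 2 + (ν2s - lam2) ^ 2) ≤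
        (q1 - p1) ^ 2 + (q2 - p2) ^ 2 +
          γ1 * ((ν1 - lam1) ^ 2 + (ν2 - lam2) ^ 2)) ∧
      ((q1 - p1) ^ 2 + (q2 - p2) ^ 2 +
          γ1 * ((ν1 - lam1) ^ 2 + (ν2 - lam2) ^ 2) =
        (q1s - p1) ^ 2 + (q2s - p2) ^ 2 +
          γ1 * ((ν1s - lam1) ^ 2 + (ν2s - lam2) ^ 2) →
        q1 = q1s ∧ q2 = q2s ∧ ν1 = ν1s ∧ ν2 = ν2s) :=
  projection_closed_form_cofactor_general g11 g12 g22 α γ1 g hγ1 hgα p1 p2 lam1 lam2 a1 a2 a3 b1 b2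
    b3 X Y ν1s ν2s q1s q2s ha1 ha2 ha3 hb1 hb2 hb3 hX hY hq1s hq2s hν1s hν2s
end
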